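/- Regularity of the inverse of a concave solution with vertical tangent (step in the proof of Theorem 3.2). Let u : [a,c] → ℝ be continuous, continuously differentiable on (a,c] with u'(x) > 0 for all x ∈ (a,c], u' locally absolutely continuous on (a,c], u concave on [a,c], and lim_{x→a⁺} u'(x) = +∞. Set α = u(a), ω = u(c), and let w : [α,ω] → [a,c] be the inverse function of u. Then w is continuously differentiable on [α,ω] with w'(α) = 0 and w'(t) = 1/u'(w(t)) for t ∈ (α,ω]; w' is increasing with 0 < w'(t) ≤ 1/u'(c) for t ∈ (α,ω]; w' is locally absolutely continuous on (α,ω]; and w''(t) = −u''(w(t)) · (w'(t))³ for almost every t ∈ (α,ω). -/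

import Mathlib

/-!
Since `u` is continuous and strictly increasing, its inverse `w` is continuous, and the inverse
function rule gives `w' = 1 / (u' ∘ w)` on `(α, ω]`. At `α`, concavity gives
`u' x ≤ slope u a x`, so the slopes of `u` at `a` blow up and those of `w` at `α` vanish. As `u'`
decreases (concavity) and `w` increases, `w'` increases.

For the absolute continuity of `w'`: `1 / u'` is a Lipschitz function of the positive absolutely
continuous `u'`, hence absolutely continuous with a.e. derivative `-u'' / u' ^ 2`, and the
substitution `s = u y` turns `∫ -u'' (w s) * w' s ^ 3 ds` into `∫ -u'' y / u' y ^ 2 dy`.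
-/

open Set Filter MeasureTheory Topology

theorem LipschitzOnWith.comp_absolutelyContinuousOnInterval {X Y : Type*} [PseudoMetricSpace X]
    [PseudoMetricSpace Y] {f : ℝ → X} {g : X → Y} {K : NNReal} {s : Set X} {a b : ℝ}
    (hg : LipschitzOnWith K g s) (hf : AbsolutelyContinuousOnInterval f a b)
    (hfs : MapsTo f (uIcc a b) s) : AbsolutelyContinuousOnInterval (g ∘ f) a b := by
  unfold AbsolutelyContinuousOnInterval at hf ⊢
  refine squeeze_zero' (.of_forall fun _ ↦ Finset.sum_nonneg fun _ _ ↦ dist_nonneg) ?_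
    (by simpa using hf.const_mul (K : ℝ))
  rw [eventually_inf_principal]
  filter_upwards with E hE
  rw [Finset.mul_sum]
  gcongr with i hi
  exact hg.dist_le_mul _ (hfs (hE.1 i hi).1) _ (hfs (hE.1 i hi).2)

theorem lipschitzOnWith_inv_of_le_abs {m : ℝ} (hm : 0 < m) :
    LipschitzOnWith (m ^ 2)⁻¹.toNNReal (fun y : ℝ ↦ y⁻¹) {y | m ≤ |y|} := by
  refine LipschitzOnWith.of_dist_le' fun x hx y hy ↦ ?_
  have hx0 : x ≠ 0 := abs_pos.mp (hm.trans_le hx)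
  have hy0 : y ≠ 0 := abs_pos.mp (hm.trans_le hy)
  rw [Real.dist_eq, Real.dist_eq, inv_sub_inv hx0 hy0, abs_div, abs_mul, abs_sub_comm,
    div_eq_inv_mul]
  gcongr
  calc m ^ 2 = m * m := sq m
    _ ≤ |x| * |y| := mul_le_mul hx hy hm.le (abs_nonneg x)

theorem AbsolutelyContinuousOnInterval.inv {f : ℝ → ℝ} {a b : ℝ}
    (hf : AbsolutelyContinuousOnInterval f a b) (hf0 : ∀ x ∈ uIcc a b, f x ≠ 0) :
    AbsolutelyContinuousOnInterval f⁻¹ a b := by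
  obtain ⟨x₀, hx₀, hmin⟩ :=
    isCompact_uIcc.exists_isMinOn nonempty_uIcc hf.continuousOn.abs
  exact (lipschitzOnWith_inv_of_le_abs (abs_pos.mpr (hf0 x₀ hx₀)))
    |>.comp_absolutelyContinuousOnInterval hf fun x hx ↦ hmin hx

theorem integral_neg_div_sq_eq_inv_sub_inv {v g : ℝ → ℝ} {p q : ℝ}
    (hg : IntervalIntegrable g volume p q)
    (hv : ∀ x ∈ uIcc p q, v x = v p + ∫ t in p..x, g t) (hv0 : ∀ x ∈ uIcc p q, v x ≠ 0) :
    ∫ t in p..q, -g t / v t ^ 2 = (v q)⁻¹ - (v p)⁻¹ := by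
  set V : ℝ → ℝ := fun x ↦ v p + ∫ t in p..x, g t
  have hvV : EqOn v V (uIcc p q) := hv
  have hV_ac : AbsolutelyContinuousOnInterval V p q :=
    (LipschitzWith.const (v p)).lipschitzOnWith.absolutelyContinuousOnInterval.add
      (hg.absolutelyContinuousOnInterval_intervalIntegral left_mem_uIcc)
  have hV0 : ∀ x ∈ uIcc p q, V x ≠ 0 := fun x hx ↦ hvV hx ▸ hv0 x hx
  calc ∫ t in p..q, -g t / v t ^ 2 = ∫ t in p..q, deriv V⁻¹ t := by
        refine intervalIntegral.integral_congr_ae ?_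
        filter_upwards [hg.ae_hasDerivAt_integral] with t hderiv ht
        have ht' : t ∈ uIcc p q := uIoc_subset_uIcc ht
        have hV : HasDerivAt V (g t) t := (hderiv ht' p left_mem_uIcc).const_add (v p)
        rw [(hV.inv (hV0 t ht')).deriv, hvV ht']
    _ = (v q)⁻¹ - (v p)⁻¹ := by
        rw [(hV_ac.inv hV0).integral_deriv_eq_sub, Pi.inv_apply, Pi.inv_apply,
          hvV right_mem_uIcc, hvV left_mem_uIcc]

theorem IsCompact.continuousOn_image_of_leftInvOn {α β : Type*} [TopologicalSpace α]
    [TopologicalSpace β] [T2Space β] {f : α → β} {g : β → α} {s : Set α} (hs : IsCompact s)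
    (hf : ContinuousOn f s) (hg : LeftInvOn g f s) : ContinuousOn g (f '' s) := by
  refine continuousOn_iff_isClosed.2 fun t ht ↦ ⟨f '' (t ∩ s),
    ((hs.inter_left ht).image_of_continuousOn (hf.mono inter_subset_right)).isClosed, ?_⟩
  rw [inter_eq_self_of_subset_left (image_mono inter_subset_right), hg.image_inter']

theorem StrictMonoOn.strictMonoOn_of_rightInvOn {α β : Type*} [LinearOrder α] [Preorder β]
    {f : α → β} {g : β → α} {s : Set α} {t : Set β}
    (hf : StrictMonoOn f s) (hg : MapsTo g t s) (hfg : RightInvOn g f t) : StrictMonoOn g t := by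
  intro x hx y hy hxy
  by_contra! h
  have := hf.monotoneOn (hg hy) (hg hx) h
  rw [hfg hx, hfg hy] at this
  exact this.not_gt hxy

theorem mapsTo_Ioc_of_rightInvOn {α β : Type*} [PartialOrder α] [Preorder β] {f : α → β}
    {g : β → α} {a c : α}
    (hg : MapsTo g (Icc (f a) (f c)) (Icc a c)) (hgf : RightInvOn g f (Icc (f a) (f c))) :
    MapsTo g (Ioc (f a) (f c)) (Ioc a c) := fun t ht ↦
  ⟨(hg (Ioc_subset_Icc_self ht)).1.lt_of_ne fun h ↦ ht.1.ne' <| by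
    rw [← hgf (Ioc_subset_Icc_self ht), ← h], (hg (Ioc_subset_Icc_self ht)).2⟩

theorem ConcaveOn.antitoneOn_of_hasDerivWithinAt {f f' : ℝ → ℝ} {S T : Set ℝ}
    (hf : ConcaveOn ℝ S f) (hTS : T ⊆ S) (hf' : ∀ x ∈ T, HasDerivWithinAt f (f' x) S x) :
    AntitoneOn f' T := by
  intro x hx y hy hxy
  rcases hxy.eq_or_lt with rfl | hxy
  · rfl
  exact (hf.le_slope_of_hasDerivWithinAt (hTS hx) (hTS hy) hxy (hf' y hy)).trans
    (hf.slope_le_of_hasDerivWithinAt (hTS hx) (hTS hy) hxy (hf' x hx))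

theorem ConcaveOn.tendsto_slope_atTop_of_tendsto_deriv {f f' : ℝ → ℝ} {a c : ℝ} (hac : a < c)
    (hf : ConcaveOn ℝ (Icc a c) f) (hf' : ∀ x ∈ Ioc a c, HasDerivWithinAt f (f' x) (Icc a c) x)
    (hblow : Tendsto f' (𝓝[>] a) atTop) : Tendsto (slope f a) (𝓝[>] a) atTop :=
  tendsto_atTop_mono' _ (eventually_of_mem (Ioo_mem_nhdsGT hac) fun x hx ↦
    hf.le_slope_of_hasDerivWithinAt (left_mem_Icc.2 hac.le) (Ioo_subset_Icc_self hx) hx.1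
      (hf' x (Ioo_subset_Ioc_self hx))) hblow

theorem hasDerivWithinAt_of_tendsto_inv_slope {𝕜 : Type*} [NontriviallyNormedField 𝕜]
    {f g : 𝕜 → 𝕜} {t : Set 𝕜} {b D : 𝕜}
    (hfg : RightInvOn g f t) (hb : b ∈ t)
    (h : Tendsto (fun y ↦ (slope f (g b) (g y))⁻¹) (𝓝[t \ {b}] b) (𝓝 D)) :
    HasDerivWithinAt g D t b := by
  rw [hasDerivWithinAt_iff_tendsto_slope]
  refine h.congr' (eventually_nhdsWithin_of_forall fun y hy ↦ ?_)
  rw [slope_def_field, slope_def_field, inv_div, hfg hy.1, hfg hb]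

theorem HasDerivWithinAt.of_rightInvOn {𝕜 : Type*} [NontriviallyNormedField 𝕜] {f g : 𝕜 → 𝕜}
    {s t : Set 𝕜} {b f' : 𝕜}
    (hf : HasDerivWithinAt f f' s (g b)) (hf' : f' ≠ 0) (hg : ContinuousWithinAt g t b)
    (hgst : MapsTo g t s) (hfg : RightInvOn g f t) (hb : b ∈ t) :
    HasDerivWithinAt g f'⁻¹ t b := by
  have hg_ne : MapsTo g (t \ {b}) (s \ {g b}) := fun y hy ↦
    ⟨hgst hy.1, fun hgy ↦ hy.2 <| by
      rw [mem_singleton_iff, ← hfg hy.1, ← hfg hb, mem_singleton_iff.1 hgy]⟩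
  exact hasDerivWithinAt_of_tendsto_inv_slope hfg hb <|
    ((hasDerivWithinAt_iff_tendsto_slope.mp hf).comp
      ((hg.mono sdiff_subset).tendsto_nhdsWithin hg_ne)).inv₀ hf'

theorem hasDerivWithinAt_zero_of_rightInvOn {f g : ℝ → ℝ} {t : Set ℝ} {b : ℝ} {l : Filter ℝ}
    (hf : Tendsto (slope f (g b)) l atTop) (hg : Tendsto g (𝓝[t \ {b}] b) l)
    (hfg : RightInvOn g f t) (hb : b ∈ t) : HasDerivWithinAt g 0 t b :=
  hasDerivWithinAt_of_tendsto_inv_slope hfg hb (hf.comp hg).inv_tendsto_atTop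

/-- The derivative of `w = u⁻¹` on `[α, ω]`. At `α` the formula `(u' (w α))⁻¹` would read the
junk value `u' a`; the vertical tangent of `u` at `a` makes the derivative `0` there. -/
noncomputable def inverseDeriv (u' w : ℝ → ℝ) (α t : ℝ) : ℝ :=
  if α < t then (u' (w t))⁻¹ else 0

section InverseDeriv

variable {a c α ω : ℝ} {u u' w : ℝ → ℝ}

theorem inverseDeriv_of_lt {t : ℝ} (ht : α < t) : inverseDeriv u' w α t = (u' (w t))⁻¹ :=
  if_pos ht

theorem inverseDeriv_of_le {t : ℝ} (ht : t ≤ α) : inverseDeriv u' w α t = 0 :=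
  if_neg ht.not_gt

theorem continuousOn_inverseDeriv (hu' : ContinuousOn u' (Ioc a c))
    (hu'0 : ∀ x ∈ Ioc a c, u' x ≠ 0) (hblow : Tendsto u' (𝓝[>] a) atTop)
    (hw : ContinuousOn w (Icc α ω)) (hw_maps : MapsTo w (Ioc α ω) (Ioc a c))
    (hw_right : Tendsto w (𝓝[Ioc α ω] α) (𝓝[>] a)) :
    ContinuousOn (inverseDeriv u' w α) (Icc α ω) := by
  intro t ht
  rcases ht.1.eq_or_lt with rfl | hαt
  · rw [← continuousWithinAt_sdiff_self, Icc_sdiff_left, ContinuousWithinAt,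
      inverseDeriv_of_le le_rfl]
    refine (hblow.comp hw_right).inv_tendsto_atTop.congr' ?_
    filter_upwards [self_mem_nhdsWithin] with s hs using (inverseDeriv_of_lt hs.1).symm
  · have hwt : w t ∈ Ioc a c := hw_maps ⟨hαt, ht.2⟩
    have hcont : ContinuousWithinAt (inverseDeriv u' w α) (Ioc α ω) t :=
      (((hu' _ hwt).comp ((hw t ht).mono Ioc_subset_Icc_self) hw_maps).inv₀ (hu'0 _ hwt)).congr
        (fun s hs ↦ inverseDeriv_of_lt hs.1) (inverseDeriv_of_lt hαt)
    exact hcont.mono_of_mem_nhdsWithin <| mem_of_superset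
      (inter_mem_nhdsWithin _ (Ioi_mem_nhds hαt)) fun s hs ↦ ⟨hs.2, hs.1.2⟩

theorem hasDerivWithinAt_inverseDeriv
    (hu : ∀ x ∈ Ioc a c, HasDerivWithinAt u (u' x) (Icc a c) x)
    (hu'0 : ∀ x ∈ Ioc a c, u' x ≠ 0) (hslope : Tendsto (slope u a) (𝓝[>] a) atTop)
    (hw : ContinuousOn w (Icc α ω)) (hw_mapsIcc : MapsTo w (Icc α ω) (Icc a c))
    (hw_maps : MapsTo w (Ioc α ω) (Ioc a c)) (hwα : w α = a)
    (hw_right : Tendsto w (𝓝[Ioc α ω] α) (𝓝[>] a)) (huw : RightInvOn w u (Icc α ω))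
    {t : ℝ} (ht : t ∈ Icc α ω) :
    HasDerivWithinAt w (inverseDeriv u' w α t) (Icc α ω) t := by
  rcases ht.1.eq_or_lt with rfl | hαt
  · rw [inverseDeriv_of_le le_rfl]
    exact hasDerivWithinAt_zero_of_rightInvOn (l := 𝓝[>] a) (by rwa [hwα])
      (by rwa [Icc_sdiff_left]) huw ht
  · have hwt : w t ∈ Ioc a c := hw_maps ⟨hαt, ht.2⟩
    rw [inverseDeriv_of_lt hαt]
    exact (hu _ hwt).of_rightInvOn (hu'0 _ hwt) (hw t ht) hw_mapsIcc huw ht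

theorem monotoneOn_inverseDeriv (hu' : AntitoneOn u' (Ioc a c))
    (hu'_pos : ∀ x ∈ Ioc a c, 0 < u' x) (hw : MonotoneOn w (Icc α ω))
    (hw_maps : MapsTo w (Ioc α ω) (Ioc a c)) :
    MonotoneOn (inverseDeriv u' w α) (Icc α ω) := by
  intro s hs t ht hst
  rcases le_or_gt s α with hsα | hαs
  · rw [inverseDeriv_of_le hsα]
    rcases le_or_gt t α with htα | hαt
    · rw [inverseDeriv_of_le htα]
    · rw [inverseDeriv_of_lt hαt]
      exact (inv_pos.2 (hu'_pos _ (hw_maps ⟨hαt, ht.2⟩))).le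
  · have hαt := hαs.trans_le hst
    rw [inverseDeriv_of_lt hαs, inverseDeriv_of_lt hαt]
    exact inv_anti₀ (hu'_pos _ (hw_maps ⟨hαt, ht.2⟩))
      (hu' (hw_maps ⟨hαs, hs.2⟩) (hw_maps ⟨hαt, ht.2⟩) (hw hs ht hst))

theorem inverseDeriv_comp_of_mem (hu : StrictMonoOn u (Icc a c))
    (hwu : LeftInvOn w u (Icc a c)) {y : ℝ} (hy : y ∈ Ioc a c) :
    inverseDeriv u' w (u a) (u y) = (u' y)⁻¹ := by
  rw [inverseDeriv_of_lt (hu (left_mem_Icc.2 (hy.1.le.trans hy.2)) (Ioc_subset_Icc_self hy) hy.1),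
    hwu (Ioc_subset_Icc_self hy)]

theorem inverseDeriv_comp_eq_add_integral {u'' : ℝ → ℝ} {p : ℝ} (hp : p ∈ Ioc a c)
    (hu : ContinuousOn u (Icc a c)) (hu_deriv : ∀ x ∈ Ioo a c, HasDerivAt u (u' x) x)
    (hu_mono : StrictMonoOn u (Icc a c)) (hu'_cont : ContinuousOn u' (Ioc a c))
    (hu'_pos : ∀ x ∈ Ioc a c, 0 < u' x) (hu'' : IntegrableOn u'' (Icc p c))
    (hu'_eq : ∀ x ∈ Icc p c, u' x = u' p + ∫ t in p..x, u'' t) (hwu : LeftInvOn w u (Icc a c)) :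
    IntervalIntegrable (fun s ↦ -u'' (w s) * inverseDeriv u' w (u a) s ^ 3) volume (u p) (u c) ∧
    ∀ x ∈ Icc p c, inverseDeriv u' w (u a) (u x) = inverseDeriv u' w (u a) (u p) +
      ∫ s in u p..u x, -u'' (w s) * inverseDeriv u' w (u a) s ^ 3 := by
  set G : ℝ → ℝ := fun s ↦ -u'' (w s) * inverseDeriv u' w (u a) s ^ 3
  have hpc : Icc p c ⊆ Ioc a c := fun y hy ↦ ⟨hp.1.trans_le hy.1, hy.2⟩
  have hG : ∀ y ∈ Icc p c, (G ∘ u) y * u' y = -u'' y / u' y ^ 2 := fun y hy ↦ by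
    have hy' := hpc hy
    simp only [G, Function.comp_apply, hwu (Ioc_subset_Icc_self hy'),
      inverseDeriv_comp_of_mem hu_mono hwu hy']
    field_simp [(hu'_pos y hy').ne']
  have hsub {x : ℝ} (hx : x ∈ Icc p c) : uIcc p x ⊆ Icc p c := by
    rw [uIcc_of_le hx.1]; exact Icc_subset_Icc_right hx.2
  have hcov {x : ℝ} (hx : x ∈ Icc p c) : ContinuousOn u (uIcc p x) ∧
      (∀ y ∈ Ioo (min p x) (max p x), HasDerivAt u (u' y) y) ∧
      ∀ y ∈ Ioo (min p x) (max p x), 0 ≤ u' y := by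
    rw [min_eq_left hx.1, max_eq_right hx.1]
    refine ⟨hu.mono ((hsub hx).trans (hpc.trans Ioc_subset_Icc_self)), fun y hy ↦ ?_,
      fun y hy ↦ (hu'_pos y (hpc (Ioo_subset_Icc_self.trans (Icc_subset_Icc_right hx.2) hy))).le⟩
    exact hu_deriv y ⟨hp.1.trans hy.1, hy.2.trans_le hx.2⟩
  have hcc : c ∈ Icc p c := ⟨hp.2, le_rfl⟩
  have hint : IntervalIntegrable (fun y ↦ -u'' y / u' y ^ 2) volume p c := by
    refine (intervalIntegrable_iff_integrableOn_Icc_of_le hp.2).2 ?_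
    refine (hu''.mul_continuousOn (g' := fun y ↦ -(u' y ^ 2)⁻¹) ?_ isCompact_Icc).congr_fun
      (fun y _ ↦ by ring) measurableSet_Icc
    exact ((hu'_cont.mono hpc).pow 2 |>.inv₀ fun y hy ↦ (pow_pos (hu'_pos y (hpc hy)) 2).ne').neg
  obtain ⟨hcont, hderiv, hnonneg⟩ := hcov hcc
  refine ⟨(intervalIntegral.integrable_comp_mul_deriv_iff_of_deriv_nonneg hcont hderiv hnonneg).1
    ((intervalIntegrable_congr_uIoo fun y hy ↦ hG y (hsub hcc (uIoo_subset_uIcc_self hy))).2 hint),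
    fun x hx ↦ ?_⟩
  obtain ⟨hcont, hderiv, hnonneg⟩ := hcov hx
  rw [← intervalIntegral.integral_comp_mul_deriv_of_deriv_nonneg hcont hderiv hnonneg,
    intervalIntegral.integral_congr fun y hy ↦ hG y (hsub hx hy),
    integral_neg_div_sq_eq_inv_sub_inv
      (((intervalIntegrable_iff_integrableOn_Icc_of_le hp.2).2 hu'').mono_set
        (uIcc_of_le hp.2 ▸ hsub hx))
      (fun y hy ↦ hu'_eq y (hsub hx hy)) (fun y hy ↦ (hu'_pos y (hpc (hsub hx hy))).ne'),
    inverseDeriv_comp_of_mem hu_mono hwu (hpc hx), inverseDeriv_comp_of_mem hu_mono hwu hp]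
  ring

theorem inverseDeriv_eq_add_integral {u'' : ℝ → ℝ} {α' : ℝ} (hα' : α' ∈ Ioc (u a) (u c))
    (hu : ContinuousOn u (Icc a c)) (hu_deriv : ∀ x ∈ Ioo a c, HasDerivAt u (u' x) x)
    (hu_mono : StrictMonoOn u (Icc a c)) (hu'_cont : ContinuousOn u' (Ioc a c))
    (hu'_pos : ∀ x ∈ Ioc a c, 0 < u' x)
    (hu'_locAC : ∀ p ∈ Ioc a c, IntegrableOn u'' (Icc p c) ∧
      ∀ x ∈ Icc p c, u' x = u' p + ∫ t in p..x, u'' t)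
    (hwu : LeftInvOn w u (Icc a c)) (huw : RightInvOn w u (Icc (u a) (u c)))
    (hw_mono : MonotoneOn w (Icc (u a) (u c))) (hw_mapsIcc : MapsTo w (Icc (u a) (u c)) (Icc a c))
    (hw_maps : MapsTo w (Ioc (u a) (u c)) (Ioc a c)) :
    IntegrableOn (fun s ↦ -u'' (w s) * inverseDeriv u' w (u a) s ^ 3) (Icc α' (u c)) ∧
    ∀ t ∈ Icc α' (u c), inverseDeriv u' w (u a) t = inverseDeriv u' w (u a) α' +
      ∫ s in α'..t, -u'' (w s) * inverseDeriv u' w (u a) s ^ 3 := by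
  have hp := hw_maps hα'
  have hα'I : α' ∈ Icc (u a) (u c) := Ioc_subset_Icc_self hα'
  obtain ⟨hint, heq⟩ := inverseDeriv_comp_eq_add_integral hp hu hu_deriv hu_mono hu'_cont hu'_pos
    (hu'_locAC _ hp).1 (hu'_locAC _ hp).2 hwu
  rw [huw hα'I] at hint heq
  refine ⟨(intervalIntegrable_iff_integrableOn_Icc_of_le hα'.2).1 hint, fun t ht ↦ ?_⟩
  have htI : t ∈ Icc (u a) (u c) := ⟨hα'.1.le.trans ht.1, ht.2⟩
  simpa only [huw htI] using heq (w t) ⟨hw_mono hα'I htI ht.1, (hw_mapsIcc htI).2⟩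

end InverseDeriv

/-- **Regularity of the inverse of a concave solution with vertical tangent (step in the proof
of Theorem 3.2).** If `u : [a,c] → ℝ` is continuous, C¹ on `(a,c]` with `u' > 0` there, `u'`
locally absolutely continuous on `(a,c]` with a.e. derivative `u''`, `u` concave, and
`u'(a⁺) = +∞`, then the inverse `w : [α,ω] → [a,c]` (with `α = u(a)`, `ω = u(c)`) is C¹ on
`[α,ω]` with `w'(α) = 0` and `w' = 1/(u'∘w)` on `(α,ω]`; `w'` is increasing with
`0 < w' ≤ 1/u'(c)` on `(α,ω]`; `w'` is locally absolutely continuous on `(α,ω]`; and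
`w'' = -u''(w)·(w')³` a.e. -/
theorem inverse_of_concave_solution_regularity
    (a c : ℝ) (hac : a < c) (u u' u'' : ℝ → ℝ)
    (hu_cont : ContinuousOn u (Icc a c))
    -- u continuously differentiable on (a,c] with u' > 0
    (hu_deriv : ∀ x ∈ Ioo a c, HasDerivAt u (u' x) x)
    (hu_derivc : HasDerivWithinAt u (u' c) (Iic c) c)
    (hu'_cont : ContinuousOn u' (Ioc a c))
    (hu'_pos : ∀ x ∈ Ioc a c, 0 < u' x)
    -- u' locally absolutely continuous on (a,c] with a.e. derivative u''
    (hu'_locAC : ∀ a' ∈ Ioc a c, IntegrableOn u'' (Icc a' c) ∧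
      ∀ x ∈ Icc a' c, u' x = u' a' + ∫ t in a'..x, u'' t)
    -- u concave on [a,c]
    (hconc : ConcaveOn ℝ (Icc a c) u)
    -- vertical tangent at a
    (hblow : Tendsto u' (𝓝[>] a) atTop)
    -- w is the inverse function of u on [a,c]
    (w : ℝ → ℝ)
    (hw_inv₁ : ∀ x ∈ Icc a c, w (u x) = x)
    (hw_inv₂ : ∀ t ∈ Icc (u a) (u c), u (w t) = t) :
    ∃ w' : ℝ → ℝ,
      -- w is continuously differentiable on [α,ω] = [u a, u c]
      ContinuousOn w' (Icc (u a) (u c)) ∧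
      (∀ t ∈ Icc (u a) (u c), HasDerivWithinAt w (w' t) (Icc (u a) (u c)) t) ∧
      (∀ t ∈ Ioo (u a) (u c), HasDerivAt w (w' t) t) ∧
      w' (u a) = 0 ∧
      (∀ t ∈ Ioc (u a) (u c), w' t = 1 / u' (w t)) ∧
      -- w' is increasing with 0 < w' ≤ 1/u'(c) on (α,ω]
      MonotoneOn w' (Icc (u a) (u c)) ∧
      (∀ t ∈ Ioc (u a) (u c), 0 < w' t ∧ w' t ≤ 1 / u' c) ∧
      -- w' is locally absolutely continuous on (α,ω], with a.e. derivative -u''(w)·(w')³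
      (∀ α' ∈ Ioc (u a) (u c),
        IntegrableOn (fun t => -u'' (w t) * (w' t) ^ 3) (Icc α' (u c)) ∧
        ∀ t ∈ Icc α' (u c),
          w' t = w' α' + ∫ s in α'..t, -u'' (w s) * (w' s) ^ 3) := by
  have ha : a ∈ Icc a c := left_mem_Icc.2 hac.le
  have hc : c ∈ Icc a c := right_mem_Icc.2 hac.le
  have hu_mono : StrictMonoOn u (Icc a c) :=
    strictMonoOn_of_deriv_pos (convex_Icc a c) hu_cont fun x hx ↦ by
      rw [interior_Icc] at hx
      exact (hu_deriv x hx).deriv ▸ hu'_pos x (Ioo_subset_Ioc_self hx)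
  have hu_deriv' : ∀ x ∈ Ioc a c, HasDerivWithinAt u (u' x) (Icc a c) x := fun x hx ↦ by
    rcases hx.2.eq_or_lt with rfl | hxc
    · exact hu_derivc.mono Icc_subset_Iic_self
    · exact (hu_deriv x ⟨hx.1, hxc⟩).hasDerivWithinAt
  have hu'0 : ∀ x ∈ Ioc a c, u' x ≠ 0 := fun x hx ↦ (hu'_pos x hx).ne'
  have hsurj : SurjOn u (Icc a c) (Icc (u a) (u c)) := hu_cont.surjOn_Icc ha hc
  have hw_mapsIcc : MapsTo w (Icc (u a) (u c)) (Icc a c) := LeftInvOn.mapsTo hw_inv₁ hsurj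
  have hw_mono : MonotoneOn w (Icc (u a) (u c)) :=
    (hu_mono.strictMonoOn_of_rightInvOn hw_mapsIcc hw_inv₂).monotoneOn
  have hwα : w (u a) = a := hw_inv₁ a ha
  have hα_mem : u a ∈ Icc (u a) (u c) := left_mem_Icc.2 (hu_mono.monotoneOn ha hc hac.le)
  have hw_maps : MapsTo w (Ioc (u a) (u c)) (Ioc a c) :=
    mapsTo_Ioc_of_rightInvOn hw_mapsIcc hw_inv₂
  have hw_cont : ContinuousOn w (Icc (u a) (u c)) :=
    (isCompact_Icc.continuousOn_image_of_leftInvOn hu_cont hw_inv₁).mono hsurj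
  have hw_right : Tendsto w (𝓝[Ioc (u a) (u c)] (u a)) (𝓝[>] a) := by
    simpa only [hwα] using ((hw_cont _ hα_mem).mono Ioc_subset_Icc_self).tendsto_nhdsWithin
      (hw_maps.mono_right Ioc_subset_Ioi_self)
  have hderiv := fun t (ht : t ∈ Icc (u a) (u c)) ↦ hasDerivWithinAt_inverseDeriv hu_deriv' hu'0
    (hconc.tendsto_slope_atTop_of_tendsto_deriv hac hu_deriv' hblow) hw_cont hw_mapsIcc hw_maps
    hwα hw_right hw_inv₂ ht
  have hu'_anti : AntitoneOn u' (Ioc a c) :=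
    hconc.antitoneOn_of_hasDerivWithinAt Ioc_subset_Icc_self hu_deriv'
  refine ⟨inverseDeriv u' w (u a),
    continuousOn_inverseDeriv hu'_cont hu'0 hblow hw_cont hw_maps hw_right, hderiv,
    fun t ht ↦ (hderiv t (Ioo_subset_Icc_self ht)).hasDerivAt (Icc_mem_nhds ht.1 ht.2),
    inverseDeriv_of_le le_rfl, fun t ht ↦ by rw [inverseDeriv_of_lt ht.1, one_div],
    monotoneOn_inverseDeriv hu'_anti hu'_pos hw_mono hw_maps, fun t ht ↦ ?_,
    fun α' hα' ↦ inverseDeriv_eq_add_integral hα' hu_cont hu_deriv hu_mono hu'_cont hu'_pos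
      hu'_locAC hw_inv₁ hw_inv₂ hw_mono hw_mapsIcc hw_maps⟩
  have hwt := hw_maps ht
  rw [inverseDeriv_of_lt ht.1, one_div]
  exact ⟨inv_pos.2 (hu'_pos _ hwt),
    inv_anti₀ (hu'_pos c (right_mem_Ioc.2 hac)) (hu'_anti hwt (right_mem_Ioc.2 hac) hwt.2)⟩
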